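/- arXiv:2208.05850 — 2 statements merged into one kernel-verified Lean document; each statement's English description precedes it below -/
import Mathlib

section
/- Let M be a path mapping between abstract merge trees T₁ and T₂, let p = v₁…v_k ∈ P(T₁) be contained in M, and let 1 < i < k. Then for any child c of v_i with c ≠ v_{i+1}, no path of the subtree T₁[(c, v_i)] is contained in M. The symmetric statement holds for T₂. -/
/-!
Identify an edge `(u, par u)` with its lower vertex `u`, so that the edge lies on a path `p`
iff `u ∈ p.verts.tail`. Two mapped paths share at most one vertex, hence no edge; and since
every mapped path starts at the root or where another one ends, the mapped paths cover every edge
between the root and a mapped edge. A mapped path inside `T₁[(c, v_i)]` either ends at `v_i` or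
forces the edge `(c, v_i)` onto some mapped path. Either way a mapped path meets the interior
vertex `v_i` of `p`, which makes it `p` itself; but `p` neither ends at `v_i` nor contains `c`.
Swapping the trees gives the statement for `T₂`.
-/

/-- An abstract merge tree: a finite unordered rooted tree (given by a parent map)
with positive real edge labels (the label of `v` is the label of the edge `(v, par v)`),
whose root has exactly one child and whose non-root inner nodes have at least two
children.  The degenerate one-vertex tree (the empty tree `⊥`) is also allowed. -/
structure AMTree where
  V : Type
  [fintypeV : Fintype V]
  [decEqV : DecidableEq V]
  root : V
  par : V → V
  par_root : par root = root
  label : V → ℝ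
  label_pos : ∀ v, v ≠ root → 0 < label v
  reach : ∀ v, ∃ k : ℕ, par^[k] v = root
  root_deg : (∀ v, v = root) ∨ (∃! c, c ≠ root ∧ par c = root)
  inner_deg : ∀ v, v ≠ root → (∃ c, c ≠ v ∧ par c = v) →
      ∃ c₁ c₂, c₁ ≠ c₂ ∧ c₁ ≠ v ∧ c₂ ≠ v ∧ par c₁ = v ∧ par c₂ = v

attribute [instance] AMTree.fintypeV AMTree.decEqV

namespace AMTree

/-- The empty tree `⊥` (a single node, no edges). -/
def bot : AMTree where
  V := Unit
  root := ()
  par _ := ()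
  par_root := rfl
  label _ := 0
  label_pos := fun v h => absurd (Subsingleton.elim v ()) h
  reach := fun _ => ⟨0, Subsingleton.elim _ _⟩
  root_deg := Or.inl fun v => Subsingleton.elim v ()
  inner_deg := fun v h _ => absurd (Subsingleton.elim v ()) h

/-- Total persistence: the sum of all edge labels. -/
noncomputable def totalP (T : AMTree) : ℝ :=
  ∑ᶠ v ∈ {v : T.V | v ≠ T.root}, T.label v

/-- Isomorphism of edge-labeled rooted trees. -/
def Isom (T T' : AMTree) : Prop :=
  ∃ e : T.V ≃ T'.V, e T.root = T'.root ∧ (∀ v, e (T.par v) = T'.par (e v)) ∧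
    ∀ v, v ≠ T.root → T.label v = T'.label (e v)

def IsLeaf (T : AMTree) (v : T.V) : Prop := ∀ w, T.par w = v → w = v

/-- `w` is a (weak) descendant of `u`. -/
def Desc (T : AMTree) (u w : T.V) : Prop := ∃ k : ℕ, T.par^[k] w = u

noncomputable def childCount (T : AMTree) (v : T.V) : ℕ :=
  Nat.card {w : T.V // T.par w = v ∧ w ≠ v}

def IsBinary (T : AMTree) : Prop :=
  ∀ v, v ≠ T.root → ¬ T.IsLeaf v → childCount T v = 2

/-- Relabeling one edge: cost is the absolute difference of the labels. -/
def RelStep (T T' : AMTree) (c : ℝ) : Prop :=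
  ∃ e : T.V ≃ T'.V, e T.root = T'.root ∧ (∀ v, e (T.par v) = T'.par (e v)) ∧
    ∃ v₀, v₀ ≠ T.root ∧ (∀ v, v ≠ T.root → v ≠ v₀ → T.label v = T'.label (e v)) ∧
      c = |T.label v₀ - T'.label (e v₀)|

/-- Label-decreasing relabel of one edge. -/
def RelStepDec (T T' : AMTree) (c : ℝ) : Prop :=
  ∃ e : T.V ≃ T'.V, e T.root = T'.root ∧ (∀ v, e (T.par v) = T'.par (e v)) ∧
    ∃ v₀, v₀ ≠ T.root ∧ (∀ v, v ≠ T.root → v ≠ v₀ → T.label v = T'.label (e v)) ∧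
      T'.label (e v₀) ≤ T.label v₀ ∧ c = T.label v₀ - T'.label (e v₀)

/-- Contraction (deletion) of a leaf edge `(u, par u)`: cost is the label of the edge.
If the parent is left with exactly one child, it is removed and its two incident
edges are merged into one whose label is the sum of the two labels. -/
def DelStep (T T' : AMTree) (c : ℝ) : Prop :=
  ∃ u : T.V, u ≠ T.root ∧ T.IsLeaf u ∧ c = T.label u ∧
    (((2 ≤ Nat.card {w : T.V // T.par w = T.par u ∧ w ≠ T.par u ∧ w ≠ u} ∨ T.par u = T.root) ∧
      ∃ e : T'.V ≃ {w : T.V // w ≠ u},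
        (e T'.root).1 = T.root ∧
        (∀ v, (e (T'.par v)).1 = T.par (e v).1) ∧
        (∀ v, v ≠ T'.root → T'.label v = T.label (e v).1))
    ∨
    (∃ s : T.V, s ≠ u ∧ T.par s = T.par u ∧ T.par u ≠ T.root ∧
      (∀ w, T.par w = T.par u → w ≠ T.par u → w = u ∨ w = s) ∧
      ∃ e : T'.V ≃ {w : T.V // w ≠ u ∧ w ≠ T.par u},
        (e T'.root).1 = T.root ∧
        (∀ v, (e (T'.par v)).1 =
          if (e v).1 = s then T.par (T.par u) else T.par (e v).1) ∧
        (∀ v, v ≠ T'.root → T'.label v =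
          if (e v).1 = s then T.label s + T.label (T.par u) else T.label (e v).1)))

/-- General edge contraction (of a leaf edge, with merging, or of an internal edge,
whose children get reattached to the parent): cost is the label of the edge. -/
def ContractStep (T T' : AMTree) (c : ℝ) : Prop :=
  DelStep T T' c ∨
  ∃ u : T.V, u ≠ T.root ∧ ¬ T.IsLeaf u ∧ c = T.label u ∧
    ∃ e : T'.V ≃ {w : T.V // w ≠ u},
      (e T'.root).1 = T.root ∧
      (∀ v, (e (T'.par v)).1 =
        if T.par (e v).1 = u then T.par u else T.par (e v).1) ∧
      (∀ v, v ≠ T'.root → T'.label v = T.label (e v).1)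

/-- One-degree edit operations: relabels, leaf-edge deletions and leaf-edge insertions. -/
def Step1 (T T' : AMTree) (c : ℝ) : Prop :=
  RelStep T T' c ∨ DelStep T T' c ∨ DelStep T' T c

/-- General edit operations: relabels, arbitrary edge contractions and their inverses. -/
def StepE (T T' : AMTree) (c : ℝ) : Prop :=
  RelStep T T' c ∨ ContractStep T T' c ∨ ContractStep T' T c

/-- Only deletions and label-decreasing relabels. -/
def DecStep (T T' : AMTree) (c : ℝ) : Prop :=
  DelStep T T' c ∨ RelStepDec T T' c

/-- Edit sequences (trees are unordered, so isomorphic trees are identified at no cost);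
the total cost is the sum of the costs of the steps. -/
inductive Seq (S : AMTree → AMTree → ℝ → Prop) : AMTree → AMTree → ℝ → Prop
  | refl {T T'} : Isom T T' → Seq S T T' 0
  | step {T₁ T₂ T₃ : AMTree} {c c' : ℝ} : S T₁ T₂ c → Seq S T₂ T₃ c' → Seq S T₁ T₃ (c + c')

/-- Edit sequences recording the list of costs of the individual operations. -/
inductive SeqL (S : AMTree → AMTree → ℝ → Prop) : AMTree → AMTree → List ℝ → Prop
  | refl {T T'} : Isom T T' → SeqL S T T' []
  | step {T₁ T₂ T₃ : AMTree} {c : ℝ} {cs : List ℝ} :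
      S T₁ T₂ c → SeqL S T₂ T₃ cs → SeqL S T₁ T₃ (c :: cs)

/-- The one-degree edit distance. -/
noncomputable def delta1 (T₁ T₂ : AMTree) : ℝ := sInf {c | Seq Step1 T₁ T₂ c}

/-- The general edit distance. -/
noncomputable def deltaE (T₁ T₂ : AMTree) : ℝ := sInf {c | Seq StepE T₁ T₂ c}

/-- A monotone path in a rooted tree: a nonempty sequence of pairwise distinct
vertices, each being a child of the previous one. -/
structure MPath (T : AMTree) where
  verts : List T.V
  ne : verts ≠ []
  chain : verts.Chain' (fun a b => T.par b = a ∧ b ≠ a)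
  nodup : verts.Nodup

def pstart {T : AMTree} (p : MPath T) : T.V := p.verts.head p.ne
def pend {T : AMTree} (p : MPath T) : T.V := p.verts.getLast p.ne

/-- The label (persistence) of a path: the sum of its edge labels. -/
def pathLabel {T : AMTree} (p : MPath T) : ℝ := (p.verts.tail.map T.label).sum

/-- A path mapping between two abstract merge trees. -/
def IsPathMapping (T₁ T₂ : AMTree) (M : Set (MPath T₁ × MPath T₂)) : Prop :=
  (∀ pq ∈ M, 2 ≤ pq.1.verts.length ∧ 2 ≤ pq.2.verts.length) ∧
  (∀ pq ∈ M, ∀ pq' ∈ M, (pq.1 = pq'.1 ↔ pq.2 = pq'.2)) ∧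
  (∀ pq ∈ M, ∀ pq' ∈ M, pq ≠ pq' →
    (∀ a b, a ∈ pq.1.verts → a ∈ pq'.1.verts → b ∈ pq.1.verts → b ∈ pq'.1.verts → a = b) ∧
    (∀ a b, a ∈ pq.2.verts → a ∈ pq'.2.verts → b ∈ pq.2.verts → b ∈ pq'.2.verts → a = b)) ∧
  (∀ pq ∈ M, (pstart pq.1 = T₁.root ∧ pstart pq.2 = T₂.root) ∨
    ∃ pq' ∈ M, pstart pq.1 = pend pq'.1 ∧ pstart pq.2 = pend pq'.2)

/-- The cost of a path mapping: label differences of mapped paths plus the labels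
of all unmapped edges of both trees (an edge is identified with its lower vertex,
and belongs to a path iff that vertex is in the tail of the path). -/
noncomputable def mapCost (T₁ T₂ : AMTree) (M : Set (MPath T₁ × MPath T₂)) : ℝ :=
  (∑ᶠ pq ∈ M, |pathLabel pq.1 - pathLabel pq.2|) +
  (∑ᶠ v ∈ {v : T₁.V | v ≠ T₁.root ∧ ∀ pq ∈ M, v ∉ pq.1.verts.tail}, T₁.label v) +
  (∑ᶠ v ∈ {v : T₂.V | v ≠ T₂.root ∧ ∀ pq ∈ M, v ∉ pq.2.verts.tail}, T₂.label v)

/-- `SplitAt T u sub rem` : `sub` is (isomorphic to) the subtree `T[(u, par u)]`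
rooted in the edge `(u, par u)` and `rem` is (isomorphic to) `T - T[(u, par u)]`,
where if `par u` is left with exactly one child it is removed and its two incident
edges merged, their labels added; if `u` was the root's only child, `rem = ⊥`. -/
def SplitAt (T : AMTree) (u : T.V) (sub rem : AMTree) : Prop :=
  u ≠ T.root ∧
  (∃ e : sub.V ≃ {w : T.V // w = T.par u ∨ T.Desc u w},
    (e sub.root).1 = T.par u ∧
    (∀ v, v ≠ sub.root → (e (sub.par v)).1 = T.par (e v).1) ∧
    (∀ v, v ≠ sub.root → sub.label v = T.label (e v).1)) ∧
  ((T.par u = T.root ∧ Isom rem bot) ∨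
   (2 ≤ Nat.card {w : T.V // T.par w = T.par u ∧ w ≠ T.par u ∧ w ≠ u} ∧
    ∃ e : rem.V ≃ {w : T.V // ¬ T.Desc u w},
      (e rem.root).1 = T.root ∧
      (∀ v, (e (rem.par v)).1 = T.par (e v).1) ∧
      (∀ v, v ≠ rem.root → rem.label v = T.label (e v).1)) ∨
   (∃ s : T.V, s ≠ u ∧ T.par s = T.par u ∧ T.par u ≠ T.root ∧
     (∀ w, T.par w = T.par u → w ≠ T.par u → w = u ∨ w = s) ∧
     ∃ e : rem.V ≃ {w : T.V // ¬ T.Desc u w ∧ w ≠ T.par u},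
       (e rem.root).1 = T.root ∧
       (∀ v, (e (rem.par v)).1 =
         if (e v).1 = s then T.par (T.par u) else T.par (e v).1) ∧
       (∀ v, v ≠ rem.root → rem.label v =
         if (e v).1 = s then T.label s + T.label (T.par u) else T.label (e v).1)))

variable {T T₁ T₂ : AMTree}

namespace MPath

variable (p : MPath T)

theorem par_getElem_succ {j : ℕ} (h : j + 1 < p.verts.length) :
    T.par p.verts[j + 1] = p.verts[j] ∧ p.verts[j + 1] ≠ p.verts[j] :=
  List.isChain_iff_getElem.mp p.chain j h

theorem exists_getElem_succ_eq_of_mem_tail {u : T.V} (hu : u ∈ p.verts.tail) :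
    ∃ j, ∃ h : j + 1 < p.verts.length, p.verts[j + 1] = u := by
  obtain ⟨j, hj, rfl⟩ := List.mem_iff_getElem.mp hu
  exact ⟨j, by simp at hj; omega, (List.getElem_tail hj).symm⟩

theorem par_mem_of_mem_tail {u : T.V} (hu : u ∈ p.verts.tail) :
    T.par u ∈ p.verts ∧ T.par u ≠ u := by
  obtain ⟨j, h, rfl⟩ := p.exists_getElem_succ_eq_of_mem_tail hu
  rw [(p.par_getElem_succ h).1]
  exact ⟨List.getElem_mem _, (p.par_getElem_succ h).2.symm⟩

theorem ne_root_of_mem_tail {u : T.V} (hu : u ∈ p.verts.tail) : u ≠ T.root := by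
  rintro rfl
  exact (p.par_mem_of_mem_tail hu).2 T.par_root

theorem eq_pstart_or_mem_tail {u : T.V} (hu : u ∈ p.verts) : u = pstart p ∨ u ∈ p.verts.tail := by
  rwa [← List.cons_head_tail p.ne, List.mem_cons] at hu

theorem getElem_mem_tail {i : ℕ} (hi0 : 0 < i) (hi : i < p.verts.length) :
    p.verts[i] ∈ p.verts.tail := by
  obtain ⟨j, rfl⟩ := Nat.exists_eq_add_of_lt hi0
  rw [← List.getElem_tail (by simp; omega)]
  exact List.getElem_mem _

theorem pend_mem_tail (h : 2 ≤ p.verts.length) : pend p ∈ p.verts.tail := by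
  rw [pend, List.getLast_eq_getElem]
  exact p.getElem_mem_tail (by omega) _

theorem getElem_ne_pend {i : ℕ} (hi : i + 1 < p.verts.length) : p.verts[i] ≠ pend p := by
  rw [pend, List.getLast_eq_getElem, Ne, p.nodup.getElem_inj_iff]
  omega

theorem eq_getElem_succ_of_par_eq {u : T.V} (hu : u ∈ p.verts.tail) {i : ℕ}
    (hi : i + 1 < p.verts.length) (h : T.par u = p.verts[i]) : u = p.verts[i + 1] := by
  obtain ⟨j, hj, rfl⟩ := p.exists_getElem_succ_eq_of_mem_tail hu
  rw [(p.par_getElem_succ hj).1, p.nodup.getElem_inj_iff] at h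
  subst h
  rfl

end MPath

namespace IsPathMapping

variable {M : Set (MPath T₁ × MPath T₂)}

theorem swap (hM : IsPathMapping T₁ T₂ M) : IsPathMapping T₂ T₁ (Prod.swap ⁻¹' M) := by
  obtain ⟨hlen, hbij, hshare, hstart⟩ := hM
  refine ⟨fun pq h => (hlen _ h).symm, fun pq h pq' h' => (hbij _ h _ h').symm,
    fun pq h pq' h' hne => (hshare _ h _ h' (Prod.swap_injective.ne hne)).symm,
    fun pq h => ?_⟩
  rcases hstart _ h with hroot | ⟨pq', h', hs⟩
  · exact Or.inl hroot.symm
  · exact Or.inr ⟨pq'.swap, by simpa using h', hs.symm⟩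

theorem eq_of_mem_tail (hM : IsPathMapping T₁ T₂ M) {r s : MPath T₁ × MPath T₂} (hr : r ∈ M)
    (hs : s ∈ M) {u : T₁.V} (hur : u ∈ r.1.verts.tail) (hus : u ∈ s.1.verts.tail) : r = s := by
  by_contra hne
  have hpar := r.1.par_mem_of_mem_tail hur
  exact hpar.2 ((hM.2.2.1 r hr s hs hne).1 _ _ hpar.1 (s.1.par_mem_of_mem_tail hus).1
    (List.mem_of_mem_tail hur) (List.mem_of_mem_tail hus))

/-- If `u` starts `r`, the path mapped before `r` ends at `u` and so shares the edge above `u`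
with `pq`. -/
theorem eq_of_mem_of_interior (hM : IsPathMapping T₁ T₂ M) {pq r : MPath T₁ × MPath T₂}
    (hpq : pq ∈ M) (hr : r ∈ M) {u : T₁.V} (hu : u ∈ pq.1.verts.tail) (hu_end : u ≠ pend pq.1)
    (hur : u ∈ r.1.verts) : r = pq := by
  rcases r.1.eq_pstart_or_mem_tail hur with hstart | hur
  · rcases hM.2.2.2 r hr with ⟨hroot, -⟩ | ⟨r', hr', hend, -⟩
    · exact absurd (hstart.trans hroot) (pq.1.ne_root_of_mem_tail hu)
    · have hr'_eq : r' = pq :=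
        hM.eq_of_mem_tail hr' hpq (hstart.trans hend ▸ r'.1.pend_mem_tail (hM.1 r' hr').1) hu
      exact absurd (hr'_eq ▸ hstart.trans hend) hu_end
  · exact hM.eq_of_mem_tail hr hpq hur hu

theorem exists_mem_tail_of_desc (hM : IsPathMapping T₁ T₂ M) {r : MPath T₁ × MPath T₂}
    (hr : r ∈ M) {u w : T₁.V} (hu : u ∈ r.1.verts.tail) (hwu : T₁.Desc w u) (hw : w ≠ T₁.root) :
    ∃ r' ∈ M, w ∈ r'.1.verts.tail := by
  obtain ⟨k, rfl⟩ := hwu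
  induction k with
  | zero => exact ⟨r, hr, hu⟩
  | succ k ih =>
    rw [Function.iterate_succ_apply'] at hw ⊢
    have hk : T₁.par^[k] u ≠ T₁.root := fun h => hw (h ▸ T₁.par_root)
    obtain ⟨r', hr', hr'u⟩ := ih hk
    rcases r'.1.eq_pstart_or_mem_tail (r'.1.par_mem_of_mem_tail hr'u).1 with hstart | hmem
    · rcases hM.2.2.2 r' hr' with ⟨hroot, -⟩ | ⟨r'', hr'', hend, -⟩
      · exact absurd (hstart.trans hroot) hw
      · exact ⟨r'', hr'', hstart.trans hend ▸ r''.1.pend_mem_tail (hM.1 r'' hr'').1⟩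
    · exact ⟨r', hr', hmem⟩

theorem notMem_of_forall_mem_subtree (hM : IsPathMapping T₁ T₂ M) {pq : MPath T₁ × MPath T₂}
    (hpq : pq ∈ M) {i : ℕ} (hi0 : 0 < i) (hi : i + 1 < pq.1.verts.length) {c : T₁.V}
    (hc : T₁.par c = pq.1.verts[i]'(Nat.lt_of_succ_lt hi)) (hc' : c ≠ pq.1.verts[i + 1])
    {p' : MPath T₁} (hp' : ∀ w ∈ p'.verts, w = pq.1.verts[i]'(Nat.lt_of_succ_lt hi) ∨ T₁.Desc c w)
    (q' : MPath T₂) : (p', q') ∉ M := by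
  intro hmem
  have hv := pq.1.getElem_mem_tail hi0 (Nat.lt_of_succ_lt hi)
  have hv_end := pq.1.getElem_ne_pend hi
  have hend := p'.pend_mem_tail (hM.1 _ hmem).1
  rcases hp' _ (List.mem_of_mem_tail hend) with hend_v | hdesc
  · obtain rfl := hM.eq_of_mem_of_interior hpq hmem hv hv_end (hend_v ▸ List.mem_of_mem_tail hend)
    exact hv_end hend_v.symm
  · have hc_root : c ≠ T₁.root := fun h =>
      pq.1.ne_root_of_mem_tail hv (by rw [← hc, h, T₁.par_root])
    obtain ⟨r, hr, hcr⟩ := hM.exists_mem_tail_of_desc hmem hend hdesc hc_root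
    obtain rfl : r = pq :=
      hM.eq_of_mem_of_interior hpq hr hv hv_end (hc ▸ (r.1.par_mem_of_mem_tail hcr).1)
    exact hc' (r.1.eq_getElem_succ_of_par_eq hcr hi hc)

end IsPathMapping

end AMTree

open AMTree in
/-- if `p = v₁…v_k` is contained in a path mapping `M` and `c ≠ v_{i+1}`
is a child of an interior vertex `v_i` (`1 < i < k`), then no path of the subtree
`T₁[(c, v_i)]` is contained in `M`; symmetrically for `T₂`. -/
theorem subtree_off_mapped_path_not_contained (T₁ T₂ : AMTree)
    (M : Set (MPath T₁ × MPath T₂)) (hM : IsPathMapping T₁ T₂ M) :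
    (∀ pq ∈ M, ∀ i : ℕ, 0 < i → ∀ hi : i + 1 < pq.1.verts.length,
      ∀ c : T₁.V, T₁.par c = pq.1.verts[i]'(by omega) → c ≠ pq.1.verts[i]'(by omega) →
        c ≠ pq.1.verts[i+1]'hi →
        ∀ p' : MPath T₁, (∀ w ∈ p'.verts, w = pq.1.verts[i]'(by omega) ∨ T₁.Desc c w) →
          ∀ q' : MPath T₂, (p', q') ∉ M) ∧
    (∀ pq ∈ M, ∀ i : ℕ, 0 < i → ∀ hi : i + 1 < pq.2.verts.length,
      ∀ c : T₂.V, T₂.par c = pq.2.verts[i]'(by omega) → c ≠ pq.2.verts[i]'(by omega) →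
        c ≠ pq.2.verts[i+1]'hi →
        ∀ q' : MPath T₂, (∀ w ∈ q'.verts, w = pq.2.verts[i]'(by omega) ∨ T₂.Desc c w) →
          ∀ p' : MPath T₁, (p', q') ∉ M) := by
  exact ⟨fun _ hpq _ hi0 hi _ hc _ hc' _ hp' q' =>
      hM.notMem_of_forall_mem_subtree hpq hi0 hi hc hc' hp' q',
    fun pq hpq _ hi0 hi _ hc _ hc' _ hq' p' =>
      hM.swap.notMem_of_forall_mem_subtree (pq := pq.swap) hpq hi0 hi hc hc' hq' p'⟩
end

section
/- Contracting a leaf edge of an abstract merge tree yields an abstract merge tree: if T is an abstract merge tree with at least two edges, and (c,p) is an edge with c a leaf, then the result T' of the one-degree contraction of (c,p) is an abstract merge tree, where if p had exactly two children its two remaining incident edges are merged into one with summed (hence positive) label. -/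
/-!
If the parent `p` of the leaf `u` keeps at least two other children, or is the root (then `T`
is a single edge), the remaining vertices with the restricted parent map already form an
abstract merge tree. Otherwise `p` has exactly one other child `s`; removing `u` and `p` and
hanging `s` below the grandparent with label `ℓ s + ℓ p` gives a tree in which the children of
every vertex correspond bijectively to its children in `T`, with `p` replaced by `s`, so the
degree conditions carry over. Termination of the new parent map holds because it advances along
the old one by one or two steps.
-/
theorem Function.exists_iterate_eq_of_forall_eq_iterate_pos {α : Type*} {f g : α → α}
    {r : α} (hr : g r = r) (hf : ∀ v, v ≠ r → ∃ j, 0 < j ∧ f v = g^[j] v) {v : α}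
    (hv : ∃ k, g^[k] v = r) : ∃ m, f^[m] v = r := by
  obtain ⟨k, hk⟩ := hv
  induction k using Nat.strong_induction_on generalizing v with
  | _ k ih =>
    by_cases hvr : v = r
    · exact ⟨0, hvr⟩
    obtain ⟨j, hj, hfv⟩ := hf v hvr
    have hk0 : k ≠ 0 := by rintro rfl; exact hvr hk
    have hfv_reach : g^[k - j] (f v) = r := by
      rcases le_total j k with hjk | hkj
      · rw [hfv, ← Function.iterate_add_apply, Nat.sub_add_cancel hjk, hk]
      · rw [Nat.sub_eq_zero_of_le hkj, hfv, ← Nat.sub_add_cancel hkj,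
          Function.iterate_add_apply, hk, Function.iterate_fixed hr, Function.iterate_zero_apply]
    obtain ⟨m, hm⟩ := ih (k - j) (by omega) hfv_reach
    exact ⟨m + 1, hm⟩

namespace AMTree

abbrev Siblings (T : AMTree) (u : T.V) : Type :=
  {w : T.V // T.par w = T.par u ∧ w ≠ T.par u ∧ w ≠ u}

theorem eq_root_of_isPeriodicPt {T : AMTree} {v : T.V} {n : ℕ} (hn : 0 < n)
    (hv : Function.IsPeriodicPt T.par n v) : v = T.root := by
  obtain ⟨k, hk⟩ := T.reach v
  calc v = T.par^[n * k] v := (hv.mul_const k).eq.symm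
    _ = T.par^[n * k - k] (T.par^[k] v) := by
      rw [← Function.iterate_add_apply, Nat.sub_add_cancel (Nat.le_mul_of_pos_left k hn)]
    _ = T.root := by rw [hk, Function.iterate_fixed T.par_root]

theorem par_ne_self {T : AMTree} {v : T.V} (hv : v ≠ T.root) : T.par v ≠ v :=
  fun h => hv (eq_root_of_isPeriodicPt one_pos (Function.IsFixedPt.isPeriodicPt h 1))

theorem eq_root_or_eq_of_par_eq_root {T : AMTree} {u : T.V} (hu : u ≠ T.root)
    (hleaf : T.IsLeaf u) (hpu : T.par u = T.root) (v : T.V) : v = T.root ∨ v = u := by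
  obtain ⟨c, -, hc⟩ := T.root_deg.resolve_left fun h => hu (h u)
  have hchild : ∀ w, w ≠ T.root → T.par w = T.root → w = u :=
    fun w hw hpw => (hc w ⟨hw, hpw⟩).trans (hc u ⟨hu, hpu⟩).symm
  obtain ⟨k, hk⟩ := T.reach v
  induction k generalizing v with
  | zero => exact Or.inl hk
  | succ k ih =>
    rcases ih (T.par v) hk with hpv | hpv
    · by_cases hv : v = T.root
      · exact Or.inl hv
      · exact Or.inr (hchild v hv hpv)
    · exact Or.inr (hleaf v hpv)

def induced (T : AMTree) (S : T.V → Prop) [DecidablePred S] (f : T.V → T.V) (ℓ : T.V → ℝ)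
    (hS_root : S T.root) (hf_mem : ∀ v, S v → S (f v)) (hf_root : f T.root = T.root)
    (hℓ : ∀ v, S v → v ≠ T.root → 0 < ℓ v) (hreach : ∀ v, S v → ∃ k, f^[k] v = T.root)
    (hroot_deg : (∀ v, S v → v = T.root) ∨
      ∃ c, S c ∧ c ≠ T.root ∧ f c = T.root ∧ ∀ w, S w → w ≠ T.root → f w = T.root → w = c)
    (hinner_deg : ∀ v, S v → v ≠ T.root → (∃ c, S c ∧ c ≠ v ∧ f c = v) →
      ∃ c₁ c₂, S c₁ ∧ S c₂ ∧ c₁ ≠ c₂ ∧ c₁ ≠ v ∧ c₂ ≠ v ∧ f c₁ = v ∧ f c₂ = v) : AMTree where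
  V := {v // S v}
  root := ⟨T.root, hS_root⟩
  par v := ⟨f v, hf_mem v v.2⟩
  par_root := Subtype.ext hf_root
  label v := ℓ v
  label_pos v hv := hℓ v v.2 fun h => hv (Subtype.ext h)
  reach v := by
    obtain ⟨k, hk⟩ := hreach v v.2
    have hsemi : Function.Semiconj Subtype.val (fun w : {v // S v} => ⟨f w, hf_mem w w.2⟩) f :=
      fun _ => rfl
    exact ⟨k, Subtype.ext ((hsemi.iterate_right k v).trans hk)⟩
  root_deg := by
    refine hroot_deg.imp (fun h v => Subtype.ext (h v v.2)) ?_
    rintro ⟨c, hc, hc_ne, hfc, huniq⟩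
    refine ⟨⟨c, hc⟩, ⟨fun h => hc_ne congr(Subtype.val $h), Subtype.ext hfc⟩, ?_⟩
    rintro w ⟨hw_ne, hfw⟩
    exact Subtype.ext (huniq w w.2 (fun h => hw_ne (Subtype.ext h)) congr(Subtype.val $hfw))
  inner_deg := by
    rintro v hv_ne ⟨c, hc_ne, hfc⟩
    obtain ⟨c₁, c₂, h₁, h₂, h₁₂, hv₁, hv₂, hf₁, hf₂⟩ :=
      hinner_deg v v.2 (fun h => hv_ne (Subtype.ext h))
        ⟨c, c.2, fun h => hc_ne (Subtype.ext h), congr(Subtype.val $hfc)⟩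
    exact ⟨⟨c₁, h₁⟩, ⟨c₂, h₂⟩, fun h => h₁₂ congr(Subtype.val $h),
      fun h => hv₁ congr(Subtype.val $h), fun h => hv₂ congr(Subtype.val $h),
      Subtype.ext hf₁, Subtype.ext hf₂⟩

def eraseLeaf (T : AMTree) {u : T.V} (hu : u ≠ T.root) (hleaf : T.IsLeaf u)
    (hsib : 2 ≤ Nat.card (T.Siblings u) ∨ T.par u = T.root) : AMTree :=
  T.induced (· ≠ u) T.par T.label hu.symm (fun v hv hpv => hv (hleaf v hpv)) T.par_root
    (fun v _ => T.label_pos v) (fun v _ => T.reach v)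
    (by
      by_cases hpu : T.par u = T.root
      · exact Or.inl fun v hv => (eq_root_or_eq_of_par_eq_root hu hleaf hpu v).resolve_right hv
      obtain ⟨c, ⟨hc_ne, hc⟩, huniq⟩ := T.root_deg.resolve_left fun h => hu (h u)
      exact Or.inr ⟨c, fun h => hpu (h ▸ hc), hc_ne, hc, fun w _ hw hpw => huniq w ⟨hw, hpw⟩⟩)
    (by
      rintro v - hv ⟨c, -, hcv, hpc⟩
      by_cases hvp : v = T.par u
      · have : Nontrivial (T.Siblings u) :=
          Finite.one_lt_card_iff_nontrivial.1 (hsib.resolve_right (hvp ▸ hv))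
        obtain ⟨⟨c₁, hp₁, hv₁, hu₁⟩, ⟨c₂, hp₂, hv₂, hu₂⟩, h₁₂⟩ := exists_pair_ne (T.Siblings u)
        subst hvp
        exact ⟨c₁, c₂, hu₁, hu₂, fun h => h₁₂ (Subtype.ext h), hv₁, hv₂, hp₁, hp₂⟩
      · obtain ⟨c₁, c₂, h₁₂, hv₁, hv₂, hp₁, hp₂⟩ := T.inner_deg v hv ⟨c, hcv, hpc⟩
        exact ⟨c₁, c₂, fun h => hvp (h ▸ hp₁).symm, fun h => hvp (h ▸ hp₂).symm,
          h₁₂, hv₁, hv₂, hp₁, hp₂⟩)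

theorem delStep_eraseLeaf {T : AMTree} {u : T.V} (hu : u ≠ T.root) (hleaf : T.IsLeaf u)
    (hsib : 2 ≤ Nat.card (T.Siblings u) ∨ T.par u = T.root) :
    DelStep T (T.eraseLeaf hu hleaf hsib) (T.label u) :=
  ⟨u, hu, hleaf, rfl, Or.inl ⟨hsib, Equiv.refl _, rfl, fun _ => rfl, fun _ _ => rfl⟩⟩

section Merge

variable (T : AMTree) (u s : T.V)

def mergePar (v : T.V) : T.V := if v = s then T.par (T.par u) else T.par v

/-- In the merged tree the removed vertex `T.par u` is represented by its remaining child `s`. -/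
def mergeLift (x : T.V) : T.V := if x = T.par u then s else x

variable {T u s}

theorem mergePar_mem (hu : u ≠ T.root) (hleaf : T.IsLeaf u) (hp : T.par u ≠ T.root)
    (honly : ∀ w, T.par w = T.par u → w ≠ T.par u → w = u ∨ w = s) {v : T.V}
    (hv : v ≠ u ∧ v ≠ T.par u) : mergePar T u s v ≠ u ∧ mergePar T u s v ≠ T.par u := by
  unfold mergePar
  split_ifs with hvs
  · exact ⟨fun h => par_ne_self hu (hleaf _ h), par_ne_self hp⟩
  · exact ⟨fun h => hv.1 (hleaf v h), fun h => (honly v h hv.2).elim hv.1 hvs⟩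

theorem mergeLift_child (hp : T.par u ≠ T.root) (hsu : s ≠ u) (hs : T.par s = T.par u)
    {x v : T.V} (hxv : x ≠ v) (hx : T.par x = v) (hv : v ≠ T.par u) :
    (mergeLift T u s x ≠ u ∧ mergeLift T u s x ≠ T.par u) ∧ mergeLift T u s x ≠ v ∧
      mergePar T u s (mergeLift T u s x) = v := by
  unfold mergeLift
  split_ifs with hxp
  · rw [hxp] at hx
    have hs_ne : s ≠ T.par u := fun h => par_ne_self hp (h ▸ hs)
    -- `s = v` would make `s` and `T.par u` a 2-cycle of `T.par`
    have hsv : s ≠ v := by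
      rintro rfl
      have hs_root : s = T.root :=
        eq_root_of_isPeriodicPt two_pos (show T.par (T.par s) = s by rw [hs, hx])
      exact hp (by rw [← hs, hs_root, T.par_root])
    exact ⟨⟨hsu, hs_ne⟩, hsv, by rw [mergePar, if_pos rfl, hx]⟩
  · have hxs : x ≠ s := fun h => hv (by rw [← hx, h, hs])
    exact ⟨⟨fun h => hv (by rw [← hx, h]), hxp⟩, hxv, by rw [mergePar, if_neg hxs, hx]⟩

theorem exists_mergeLift_eq {w : T.V} (hw : w ≠ T.par u) :
    ∃ x, mergeLift T u s x = w ∧ T.par x = mergePar T u s w ∧ (x = w ∨ x = T.par u) := by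
  by_cases hws : w = s
  · exact ⟨T.par u, by rw [mergeLift, if_pos rfl, hws], by rw [mergePar, if_pos hws],
      Or.inr rfl⟩
  · exact ⟨w, by rw [mergeLift, if_neg hw], by rw [mergePar, if_neg hws], Or.inl rfl⟩

theorem mergeLift_injective_of_ne {x y : T.V} (hx : x ≠ s) (hy : y ≠ s)
    (h : mergeLift T u s x = mergeLift T u s y) : x = y := by
  unfold mergeLift at h
  split_ifs at h with hxp hyp hyp
  · exact hxp.trans hyp.symm
  · exact absurd h.symm hy
  · exact absurd h hx
  · exact h

end Merge

def eraseLeafMerge (T : AMTree) {u s : T.V} (hu : u ≠ T.root) (hleaf : T.IsLeaf u)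
    (hp : T.par u ≠ T.root) (hsu : s ≠ u) (hs : T.par s = T.par u)
    (honly : ∀ w, T.par w = T.par u → w ≠ T.par u → w = u ∨ w = s) : AMTree :=
  T.induced (fun w => w ≠ u ∧ w ≠ T.par u) (mergePar T u s)
    (fun v => if v = s then T.label s + T.label (T.par u) else T.label v)
    ⟨hu.symm, hp.symm⟩ (fun _ => mergePar_mem hu hleaf hp honly)
    (by rw [mergePar, if_neg fun h => hp (by rw [← hs, ← h, T.par_root]), T.par_root])
    (by
      intro v _ hv
      split_ifs
      · exact add_pos (T.label_pos s fun h => hp (by rw [← hs, h, T.par_root])) (T.label_pos _ hp)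
      · exact T.label_pos v hv)
    (fun v _ => by
      refine Function.exists_iterate_eq_of_forall_eq_iterate_pos T.par_root (fun w _ => ?_)
        (T.reach v)
      by_cases hws : w = s
      · exact ⟨2, two_pos, by rw [mergePar, if_pos hws, ← hs, hws]; rfl⟩
      · exact ⟨1, one_pos, by rw [mergePar, if_neg hws]; rfl⟩)
    (by
      obtain ⟨c, ⟨hc_ne, hc⟩, huniq⟩ := T.root_deg.resolve_left fun h => hu (h u)
      obtain ⟨hc_mem, hc_ne', hfc⟩ := mergeLift_child hp hsu hs hc_ne hc (Ne.symm hp)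
      refine Or.inr ⟨mergeLift T u s c, hc_mem, hc_ne', hfc, fun w hw hw_ne hfw => ?_⟩
      obtain ⟨x, hxw, hpx, hx⟩ := exists_mergeLift_eq (s := s) hw.2
      have hx_ne : x ≠ T.root := by rcases hx with rfl | rfl; exacts [hw_ne, hp]
      rw [← hxw, huniq x ⟨hx_ne, hpx.trans hfw⟩])
    (by
      rintro v hv hv_ne ⟨c, hc, hcv, hfc⟩
      obtain ⟨x, -, hpx, hx⟩ := exists_mergeLift_eq (s := s) hc.2
      have hxv : x ≠ v := by rcases hx with rfl | rfl; exacts [hcv, hv.2.symm]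
      obtain ⟨c₁, c₂, h₁₂, hv₁, hv₂, hp₁, hp₂⟩ := T.inner_deg v hv_ne ⟨x, hxv, hpx.trans hfc⟩
      obtain ⟨hc₁, hc₁v, hf₁⟩ := mergeLift_child hp hsu hs hv₁ hp₁ hv.2
      obtain ⟨hc₂, hc₂v, hf₂⟩ := mergeLift_child hp hsu hs hv₂ hp₂ hv.2
      have hc_ne_s : ∀ {c}, T.par c = v → c ≠ s := fun hpc h => hv.2 (by rw [← hpc, h, hs])
      exact ⟨_, _, hc₁, hc₂,
        fun h => h₁₂ (mergeLift_injective_of_ne (hc_ne_s hp₁) (hc_ne_s hp₂) h),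
        hc₁v, hc₂v, hf₁, hf₂⟩)

theorem delStep_eraseLeafMerge {T : AMTree} {u s : T.V} (hu : u ≠ T.root)
    (hleaf : T.IsLeaf u) (hp : T.par u ≠ T.root) (hsu : s ≠ u) (hs : T.par s = T.par u)
    (honly : ∀ w, T.par w = T.par u → w ≠ T.par u → w = u ∨ w = s) :
    DelStep T (T.eraseLeafMerge hu hleaf hp hsu hs honly) (T.label u) :=
  ⟨u, hu, hleaf, rfl, Or.inr ⟨s, hsu, hs, hp, honly, Equiv.refl _, rfl, fun _ => rfl,
    fun _ _ => rfl⟩⟩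

theorem exists_sibling_of_card_lt_two {T : AMTree} {u : T.V} (hu : u ≠ T.root)
    (hp : T.par u ≠ T.root) (hcard : Nat.card (T.Siblings u) < 2) :
    ∃ s, s ≠ u ∧ T.par s = T.par u ∧ ∀ w, T.par w = T.par u → w ≠ T.par u → w = u ∨ w = s := by
  obtain ⟨c₁, c₂, h₁₂, hn₁, hn₂, hp₁, hp₂⟩ :=
    T.inner_deg (T.par u) hp ⟨u, (par_ne_self hu).symm, rfl⟩
  obtain ⟨s, hsu, hs, hsp⟩ : ∃ s, s ≠ u ∧ T.par s = T.par u ∧ s ≠ T.par u := by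
    by_cases h₁ : c₁ = u
    · exact ⟨c₂, fun h => h₁₂ (h₁.trans h.symm), hp₂, hn₂⟩
    · exact ⟨c₁, h₁, hp₁, hn₁⟩
  have : Subsingleton (T.Siblings u) :=
    Finite.card_le_one_iff_subsingleton.1 (Nat.le_of_lt_succ hcard)
  refine ⟨s, hsu, hs, fun w hw hwp => or_iff_not_imp_left.2 fun hwu => ?_⟩
  have := Subsingleton.elim (α := T.Siblings u) ⟨w, hw, hwp, hwu⟩ ⟨s, hs, hsp, hsu⟩
  exact congr(Subtype.val $this)

end AMTree

open AMTree in
theorem leaf_contraction_is_AMT_general (T : AMTree)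
    (u : T.V) (hu : u ≠ T.root) (hleaf : T.IsLeaf u) :
    ∃ T' : AMTree, DelStep T T' (T.label u) := by
  by_cases hsib : 2 ≤ Nat.card (T.Siblings u) ∨ T.par u = T.root
  · exact ⟨_, delStep_eraseLeaf hu hleaf hsib⟩
  · rw [not_or, not_le] at hsib
    obtain ⟨s, hsu, hs, honly⟩ := exists_sibling_of_card_lt_two hu hsib.2 hsib.1
    exact ⟨_, delStep_eraseLeafMerge hu hleaf hsib.2 hsu hs honly⟩

open AMTree in
/-- contracting a leaf edge of an abstract merge tree with at least two
edges yields an abstract merge tree (with the merged edge label being the sum, hence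
positive): the contracted tree exists as an abstract merge tree. -/
theorem leaf_contraction_is_AMT (T : AMTree)
    (hT : 2 ≤ Nat.card {v : T.V // v ≠ T.root})
    (u : T.V) (hu : u ≠ T.root) (hleaf : T.IsLeaf u) :
    ∃ T' : AMTree, DelStep T T' (T.label u) :=
  leaf_contraction_is_AMT_general T u hu hleaf
end
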